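/- Let (M_k) be any family of ℂ-linear maps on d^n × d^n complex matrices indexed by k ∈ (ℤ/dℤ)^n, let M̂_k be its randomized compilation, let m ≥ 1, and fix c_1, …, c_m ∈ (ℤ/dℤ)^n with the convention c_{m+1} = 0. Then for every d^n × d^n complex matrix ρ, Σ_{k_1, …, k_m ∈ (ℤ/dℤ)^n} ( ∏_{j=1}^m χ_{k_j}(c_j − c_{j+1})* ) · Tr[ M̂_{k_m} ∘ ⋯ ∘ M̂_{k_1}(ρ) ] = Tr(Z^{−c_1} ρ) · ∏_{j=1}^m ν̃_{c_j, c_{j+1}}(M). -/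

import Mathlib

open scoped BigOperators
open Matrix

abbrev QIdx (d n : ℕ) := Fin n → ZMod d
abbrev QMat (d n : ℕ) := Matrix (QIdx d n) (QIdx d n) ℂ

noncomputable def chi (d n : ℕ) (z j : QIdx d n) : ℂ :=
  Complex.exp (2 * Real.pi * Complex.I * ((∑ i, (z i).val * (j i).val : ℕ) : ℂ) / d)

noncomputable def eZ (d : ℕ) (a : ZMod d) : ℂ :=
  Complex.exp (2 * Real.pi * Complex.I * ((a.val : ℕ) : ℂ) / d)

lemma eZ_natCast (d : ℕ) [NeZero d] (N : ℕ) :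
    eZ d ((N : ZMod d)) = Complex.exp (2 * Real.pi * Complex.I * (N : ℂ) / d) := by
  have hd : (d:ℂ) ≠ 0 := Nat.cast_ne_zero.mpr (NeZero.ne d)
  obtain ⟨q, hq⟩ : ∃ q, N = ((N : ZMod d)).val + d * q :=
    ⟨N / d, by rw [ZMod.val_natCast]; exact (Nat.mod_add_div _ _).symm⟩
  rw [eZ]
  conv_rhs => rw [hq]
  push_cast
  rw [show 2 * (Real.pi:ℂ) * Complex.I * ((((N:ZMod d)).val : ℂ) + (d:ℂ)*(q:ℂ)) / d
      = 2 * (Real.pi:ℂ) * Complex.I * (((N:ZMod d)).val : ℂ) / d + (q:ℂ) * (2*(Real.pi:ℂ)*Complex.I) by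
      field_simp]
  rw [Complex.exp_add]
  rw [show ((q:ℂ) * (2*(Real.pi:ℂ)*Complex.I)) = ((q:ℤ):ℂ) * (2*(Real.pi:ℂ)*Complex.I) by push_cast; ring]
  rw [Complex.exp_int_mul_two_pi_mul_I, mul_one]

lemma eZ_zero (d : ℕ) [NeZero d] : eZ d 0 = 1 := by
  simp [eZ, ZMod.val_zero]

lemma eZ_add (d : ℕ) [NeZero d] (a b : ZMod d) : eZ d (a + b) = eZ d a * eZ d b := by
  have h1 : ((a.val + b.val : ℕ) : ZMod d) = a + b := by
    push_cast
    simp [ZMod.natCast_val, ZMod.cast_id]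
  have := eZ_natCast d (a.val + b.val)
  rw [h1] at this
  rw [this, eZ, eZ, ← Complex.exp_add]
  congr 1
  push_cast
  ring

lemma eZ_eq_one_iff (d : ℕ) [NeZero d] (a : ZMod d) : eZ d a = 1 ↔ a = 0 := by
  constructor
  · intro h
    rw [eZ, Complex.exp_eq_one_iff] at h
    obtain ⟨k, hk⟩ := h
    have hd : (d:ℂ) ≠ 0 := Nat.cast_ne_zero.mpr (NeZero.ne d)
    have h2 : (2:ℂ) * Real.pi * Complex.I ≠ 0 := by
      simp [Real.pi_ne_zero, Complex.I_ne_zero]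
    have hval : ((a.val : ℂ)) = (k:ℂ) * d := by
      have h4 : 2*Real.pi*Complex.I*((a.val:ℕ):ℂ) = 2*Real.pi*Complex.I*((k:ℂ)*d) := by
        have := hk
        field_simp at this
        linear_combination (2*Real.pi*Complex.I) * this
      exact mul_left_cancel₀ h2 h4
    have hz : ((a.val : ℤ) : ℂ) = ((k * d : ℤ) : ℂ) := by push_cast; linear_combination hval
    have hz2 : (a.val : ℤ) = k * d := by exact_mod_cast hz
    have hdvd : (d:ℤ) ∣ (a.val : ℤ) := Dvd.intro_left k hz2.symm
    have hdvd' : d ∣ a.val := Int.ofNat_dvd.mp hdvd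
    have : a.val = 0 := by
      rcases Nat.eq_zero_or_pos a.val with h0 | h0
      · exact h0
      · exact absurd a.val_lt (not_lt.mpr (Nat.le_of_dvd h0 hdvd'))
    exact (ZMod.val_eq_zero a).mp this
  · intro h; rw [h, eZ_zero]

lemma eZ_ne_zero (d : ℕ) (a : ZMod d) : eZ d a ≠ 0 := Complex.exp_ne_zero _

section chiLemmas
variable (d n : ℕ) [NeZero d]

lemma chi_eq_eZ (z j : QIdx d n) : chi d n z j = eZ d (∑ i, z i * j i) := by
  have h : ((∑ i, (z i).val * (j i).val : ℕ) : ZMod d) = ∑ i, z i * j i := by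
    push_cast
    simp [ZMod.natCast_val, ZMod.cast_id]
  rw [← h, eZ_natCast, chi]

lemma chi_comm (z j : QIdx d n) : chi d n z j = chi d n j z := by
  rw [chi_eq_eZ, chi_eq_eZ]
  congr 1
  exact Finset.sum_congr rfl fun i _ => mul_comm _ _

lemma chi_add_left (z w j : QIdx d n) :
    chi d n (z + w) j = chi d n z j * chi d n w j := by
  rw [chi_eq_eZ, chi_eq_eZ, chi_eq_eZ, ← eZ_add]
  congr 1
  rw [← Finset.sum_add_distrib]
  exact Finset.sum_congr rfl fun i _ => by simp [add_mul]

lemma chi_add_right (z u v : QIdx d n) :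
    chi d n z (u + v) = chi d n z u * chi d n z v := by
  rw [chi_comm, chi_add_left, chi_comm d n u, chi_comm d n v]

lemma chi_zero_left (j : QIdx d n) : chi d n 0 j = 1 := by
  rw [chi_eq_eZ]
  simp [eZ_zero]

lemma chi_zero_right (z : QIdx d n) : chi d n z 0 = 1 := by
  rw [chi_comm, chi_zero_left]

lemma chi_ne_zero (z j : QIdx d n) : chi d n z j ≠ 0 := Complex.exp_ne_zero _

lemma chi_neg_left (z j : QIdx d n) : chi d n (-z) j = (chi d n z j)⁻¹ := by
  exact eq_inv_of_mul_eq_one_left (by rw [← chi_add_left, neg_add_cancel, chi_zero_left])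

lemma chi_neg_right (z j : QIdx d n) : chi d n z (-j) = (chi d n z j)⁻¹ := by
  rw [chi_comm, chi_neg_left, chi_comm]

lemma star_chi (z j : QIdx d n) : (starRingEnd ℂ) (chi d n z j) = chi d n (-z) j := by
  rw [chi_neg_left]
  rw [chi]
  rw [← Complex.exp_conj]
  rw [← Complex.exp_neg]
  congr 1
  simp only [map_div₀, _root_.map_mul, Complex.conj_I, map_natCast, map_ofNat, Complex.conj_ofReal]
  ring

lemma chi_sub_right (z u v : QIdx d n) :
    chi d n z (u - v) = chi d n z u * (chi d n z v)⁻¹ := by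
  rw [sub_eq_add_neg, chi_add_right, chi_neg_right]

lemma card_QIdx : Fintype.card (QIdx d n) = d ^ n := by
  simp [Fintype.card_fun, ZMod.card]

lemma sum_chi (v : QIdx d n) :
    ∑ k : QIdx d n, chi d n k v = if v = 0 then ((d:ℂ)) ^ n else 0 := by
  by_cases hv : v = 0
  · subst hv
    simp only [chi_zero_right, Finset.sum_const, Finset.card_univ, card_QIdx, nsmul_eq_mul, mul_one, if_true]
    push_cast
    ring
  · rw [if_neg hv]
    obtain ⟨i, hi⟩ : ∃ i, v i ≠ 0 := Function.ne_iff.mp hv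
    set k0 : QIdx d n := Pi.single i 1 with hk0
    have hchi : chi d n k0 v = eZ d (v i) := by
      rw [chi_eq_eZ]
      congr 1
      rw [Finset.sum_eq_single i]
      · simp [hk0]
      · intro b _ hb; simp [hk0, Pi.single_eq_of_ne hb]
      · intro h; exact absurd (Finset.mem_univ i) h
    have hne : chi d n k0 v ≠ 1 := by
      rw [hchi]
      intro h
      exact hi ((eZ_eq_one_iff d (v i)).mp h)
    have hshift : ∑ k : QIdx d n, chi d n k v
        = (∑ k : QIdx d n, chi d n k v) * chi d n k0 v := by
      rw [Finset.sum_mul]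
      refine Fintype.sum_equiv (Equiv.subRight k0) _ _ fun k => ?_
      simp only [Equiv.subRight_apply]
      rw [← chi_add_left, sub_add_cancel]
    have := sub_eq_zero.mpr hshift
    rw [show ∑ k : QIdx d n, chi d n k v - (∑ k : QIdx d n, chi d n k v) * chi d n k0 v
        = (∑ k : QIdx d n, chi d n k v) * (1 - chi d n k0 v) by ring] at this
    rcases mul_eq_zero.mp this with h | h
    · exact h
    · exact absurd (by linear_combination -h) hne

end chiLemmas

noncomputable def WX (d n : ℕ) (x : QIdx d n) : QMat d n :=
  Matrix.of fun a b => if a = b + x then (1 : ℂ) else 0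

noncomputable def WZ (d n : ℕ) (z : QIdx d n) : QMat d n :=
  Matrix.diagonal fun j => chi d n z j

section weyl
variable (d n : ℕ) [NeZero d]

lemma chi_neg_flip (z j : QIdx d n) : chi d n (-z) j = chi d n z (-j) := by
  rw [chi_neg_left, chi_neg_right]

lemma WZ_conjT (t : QIdx d n) : (WZ d n t)ᴴ = WZ d n (-t) := by
  ext p q
  rw [Matrix.conjTranspose_apply, WZ, WZ, Matrix.diagonal_apply, Matrix.diagonal_apply]
  by_cases h : p = q
  · rw [if_pos h.symm, if_pos h, h, Complex.star_def, star_chi]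
  · rw [if_neg (fun hc => h hc.symm), if_neg h, star_zero]

lemma WZ_mul_WZ (s t : QIdx d n) : WZ d n s * WZ d n t = WZ d n (s + t) := by
  rw [WZ, WZ, WZ, Matrix.diagonal_mul_diagonal]
  refine congrArg Matrix.diagonal ?_
  funext j
  rw [← chi_add_left]

lemma trace_WZ (t : QIdx d n) : (WZ d n t).trace = if t = 0 then ((d:ℂ)) ^ n else 0 := by
  rw [WZ, Matrix.trace_diagonal, ← sum_chi d n t]
  exact Finset.sum_congr rfl fun i _ => chi_comm d n t i

lemma WZ_mul_apply (s : QIdx d n) (A : QMat d n) (p q : QIdx d n) :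
    (WZ d n s * A) p q = chi d n s p * A p q := by
  rw [WZ, Matrix.diagonal_mul]

lemma mul_WZ_conjT_apply (A : QMat d n) (t : QIdx d n) (p q : QIdx d n) :
    (A * (WZ d n t)ᴴ) p q = A p q * chi d n (-t) q := by
  rw [WZ_conjT, WZ, Matrix.mul_diagonal]

lemma trace_WZneg_mul (s : QIdx d n) (A : QMat d n) :
    (WZ d n (-s) * A).trace = ∑ t, chi d n (-s) t * A t t := by
  rw [Matrix.trace]
  exact Finset.sum_congr rfl fun t _ => by rw [Matrix.diag_apply, WZ_mul_apply]

lemma WX_mul_apply (x : QIdx d n) (A : QMat d n) (p q : QIdx d n) :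
    (WX d n x * A) p q = A (p - x) q := by
  rw [Matrix.mul_apply]
  have : ∀ r : QIdx d n, WX d n x p r * A r q = if p - x = r then A r q else 0 := by
    intro r
    rw [WX, Matrix.of_apply]
    by_cases h : p = r + x
    · rw [if_pos h, if_pos (by rw [h]; exact add_sub_cancel_right r x), one_mul]
    · rw [if_neg h, if_neg (fun hc => h (by rw [← hc]; exact (sub_add_cancel p x).symm)), zero_mul]
  rw [Finset.sum_congr rfl fun r _ => this r, Finset.sum_ite_eq Finset.univ (p - x) (fun r => A r q),
    if_pos (Finset.mem_univ _)]

lemma mul_WX_conjT_apply (A : QMat d n) (x : QIdx d n) (p q : QIdx d n) :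
    (A * (WX d n x)ᴴ) p q = A p (q - x) := by
  rw [Matrix.mul_apply]
  have : ∀ r : QIdx d n, A p r * (WX d n x)ᴴ r q = if q - x = r then A p r else 0 := by
    intro r
    rw [Matrix.conjTranspose_apply, WX, Matrix.of_apply]
    by_cases h : q = r + x
    · rw [if_pos h, if_pos (by rw [h]; exact add_sub_cancel_right r x), star_one, mul_one]
    · rw [if_neg h, if_neg (fun hc => h (by rw [← hc]; exact (sub_add_cancel q x).symm)), star_zero, mul_zero]
  rw [Finset.sum_congr rfl fun r _ => this r, Finset.sum_ite_eq Finset.univ (q - x) (fun r => A p r),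
    if_pos (Finset.mem_univ _)]

lemma X_conj_apply (x : QIdx d n) (A : QMat d n) (p q : QIdx d n) :
    (WX d n x * A * (WX d n x)ᴴ) p q = A (p - x) (q - x) := by
  rw [mul_WX_conjT_apply, WX_mul_apply]

lemma XZX (x s : QIdx d n) :
    WX d n x * WZ d n s * (WX d n x)ᴴ = chi d n s (-x) • WZ d n s := by
  ext p q
  rw [X_conj_apply, Matrix.smul_apply, WZ, Matrix.diagonal_apply, Matrix.diagonal_apply]
  by_cases h : p = q
  · rw [if_pos (by rw [h]), if_pos h, smul_eq_mul, show p - x = p + (-x) from sub_eq_add_neg p x,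
      chi_add_right, mul_comm]
  · rw [if_neg (fun hc => h (by ext i; have := congrFun hc i; simpa using this)), if_neg h, smul_zero]

lemma Zavg (A : QMat d n) :
    ∑ b : QIdx d n, WZ d n b * A * (WZ d n b)ᴴ
      = ∑ s : QIdx d n, ((WZ d n (-s) * A).trace) • WZ d n s := by
  ext p q
  have hLb : ∀ b : QIdx d n, (WZ d n b * A * (WZ d n b)ᴴ) p q = chi d n b (p - q) * A p q := by
    intro b
    rw [mul_WZ_conjT_apply, WZ_mul_apply, chi_neg_flip,
      show chi d n b p * A p q * chi d n b (-q) = chi d n b p * chi d n b (-q) * A p q from by ring,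
      ← chi_add_right, ← sub_eq_add_neg]
  have hl : (∑ b : QIdx d n, WZ d n b * A * (WZ d n b)ᴴ) p q
      = (if p - q = 0 then ((d:ℂ))^n else 0) * A p q := by
    rw [Matrix.sum_apply, Finset.sum_congr rfl fun b _ => hLb b, ← Finset.sum_mul, sum_chi]
  rw [hl, Matrix.sum_apply]
  by_cases h : p = q
  · subst h
    rw [if_pos (sub_self p)]
    have hRs : ∀ s : QIdx d n, ((WZ d n (-s) * A).trace • WZ d n s) p p
        = ∑ t, chi d n s (p - t) * A t t := by
      intro s
      rw [Matrix.smul_apply, trace_WZneg_mul, smul_eq_mul, WZ, Matrix.diagonal_apply_eq,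
        Finset.sum_mul]
      refine Finset.sum_congr rfl fun t _ => ?_
      rw [chi_neg_flip, chi_sub_right, chi_neg_right]
      ring
    rw [Finset.sum_congr rfl fun s _ => hRs s, Finset.sum_comm]
    have hcol : ∀ t : QIdx d n, ∑ s : QIdx d n, chi d n s (p - t) * A t t
        = (if p - t = 0 then ((d:ℂ))^n else 0) * A t t := by
      intro t
      rw [← Finset.sum_mul, sum_chi]
    rw [Finset.sum_congr rfl fun t _ => hcol t]
    rw [Finset.sum_eq_single p (fun t _ ht => by
      rw [if_neg (fun hc => ht (sub_eq_zero.mp hc).symm), zero_mul])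
      (fun ht => absurd (Finset.mem_univ p) ht)]
    rw [if_pos (sub_self p)]
  · rw [if_neg (fun hc => h (sub_eq_zero.mp hc)), zero_mul]
    refine (Finset.sum_eq_zero fun s _ => ?_).symm
    have hz : WZ d n s p q = 0 := by rw [WZ, Matrix.diagonal_apply, if_neg h]
    rw [Matrix.smul_apply, hz, smul_zero]

lemma Gshift (x s : QIdx d n) (A : QMat d n) :
    (WZ d n (-s) * (WX d n (-x) * A * (WX d n (-x))ᴴ)).trace
      = chi d n s x * (WZ d n (-s) * A).trace := by
  rw [trace_WZneg_mul, trace_WZneg_mul, Finset.mul_sum]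
  have key : ∀ t : QIdx d n,
      chi d n (-s) t * (WX d n (-x) * A * (WX d n (-x))ᴴ) t t
        = chi d n (-s) t * A (t + x) (t + x) := by
    intro t
    rw [X_conj_apply, sub_neg_eq_add]
  rw [Finset.sum_congr rfl fun t _ => key t]
  refine Fintype.sum_equiv (Equiv.addRight x) _ _ fun t => ?_
  simp only [Equiv.coe_addRight]
  have h1 : chi d n s x * chi d n (-s) x = 1 := by
    rw [← chi_add_left, add_neg_cancel, chi_zero_left]
  rw [chi_add_right]
  linear_combination (-(chi d n (-s) t * A (t + x) (t + x))) * h1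

lemma trace_WZneg_mul_WZ (s v : QIdx d n) :
    (WZ d n (-s) * WZ d n v).trace = if s = v then ((d:ℂ))^n else 0 := by
  rw [WZ_mul_WZ, trace_WZ]
  exact if_congr neg_add_eq_zero rfl rfl

end weyl

noncomputable def gpf (d n : ℕ) [NeZero d]
    (M : QIdx d n → (QMat d n →ₗ[ℂ] QMat d n)) (s t : QIdx d n) : ℂ :=
  (1 / (d : ℂ) ^ n) *
    ∑ k : QIdx d n, (starRingEnd ℂ) (chi d n k (s - t)) * ((WZ d n t)ᴴ * M k (WZ d n s)).trace

noncomputable def rc (d n : ℕ) [NeZero d]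
    (M : QIdx d n → (QMat d n →ₗ[ℂ] QMat d n)) (k : QIdx d n) (ρ : QMat d n) : QMat d n :=
  (1 / (d : ℂ) ^ (3 * n)) •
    ∑ a : QIdx d n, ∑ b : QIdx d n, ∑ x : QIdx d n,
      WX d n x * WZ d n a *
        (M (k - x) (WZ d n b * (WX d n (-x) * ρ * (WX d n (-x))ᴴ) * (WZ d n b)ᴴ)) *
        (WZ d n a)ᴴ * (WX d n x)ᴴ


section step
variable (d n : ℕ) [NeZero d] (M : QIdx d n → (QMat d n →ₗ[ℂ] QMat d n))

noncomputable def Fc (c c' s : QIdx d n) : ℂ :=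
  (1 / (d : ℂ) ^ n) *
    ∑ k : QIdx d n, (starRingEnd ℂ) (chi d n k (c - c')) *
      ((WZ d n (-(s + c' - c)) * (M k) (WZ d n s)).trace)

lemma Fc_self (c c' : QIdx d n) : Fc d n M c c' c = gpf d n M c c' := by
  have h : c + c' - c = c' := add_sub_cancel_left c c'
  rw [Fc, gpf, h]
  refine congrArg _ (Finset.sum_congr rfl fun k _ => ?_)
  rw [WZ_conjT]

lemma inner_ab (L : QMat d n →ₗ[ℂ] QMat d n) (x : QIdx d n) (σ : QMat d n) :
    ∑ a : QIdx d n, ∑ b : QIdx d n,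
      WX d n x * WZ d n a * (L (WZ d n b * (WX d n (-x) * σ * (WX d n (-x))ᴴ) * (WZ d n b)ᴴ)) *
        (WZ d n a)ᴴ * (WX d n x)ᴴ
    = ∑ s : QIdx d n, ∑ t : QIdx d n,
        (chi d n s x * (WZ d n (-s) * σ).trace * (WZ d n (-t) * L (WZ d n s)).trace
          * chi d n t (-x)) • WZ d n t := by
  have hsum : ∑ b : QIdx d n,
      WZ d n b * (WX d n (-x) * σ * (WX d n (-x))ᴴ) * (WZ d n b)ᴴ
      = ∑ s : QIdx d n, (chi d n s x * (WZ d n (-s) * σ).trace) • WZ d n s := by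
    rw [Zavg]
    exact Finset.sum_congr rfl fun s _ => by rw [Gshift]
  have hL : ∑ b : QIdx d n,
      L (WZ d n b * (WX d n (-x) * σ * (WX d n (-x))ᴴ) * (WZ d n b)ᴴ)
      = ∑ s : QIdx d n, (chi d n s x * (WZ d n (-s) * σ).trace) • L (WZ d n s) := by
    rw [← map_sum, hsum, map_sum]
    exact Finset.sum_congr rfl fun s _ => L.map_smul _ _
  have hdist : ∀ a : QIdx d n,
      ∑ b : QIdx d n, WX d n x * WZ d n a
          * (L (WZ d n b * (WX d n (-x) * σ * (WX d n (-x))ᴴ) * (WZ d n b)ᴴ))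
          * (WZ d n a)ᴴ * (WX d n x)ᴴ
      = ∑ s : QIdx d n, (chi d n s x * (WZ d n (-s) * σ).trace) •
          (WX d n x * WZ d n a * L (WZ d n s) * (WZ d n a)ᴴ * (WX d n x)ᴴ) := by
    intro a
    rw [show ∀ (Y : QIdx d n → QMat d n),
        (∑ b, WX d n x * WZ d n a * Y b * (WZ d n a)ᴴ * (WX d n x)ᴴ)
        = WX d n x * WZ d n a * (∑ b, Y b) * (WZ d n a)ᴴ * (WX d n x)ᴴ from fun Y => by
      rw [Finset.mul_sum, Finset.sum_mul, Finset.sum_mul]]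
    rw [hL, Finset.mul_sum, Finset.sum_mul, Finset.sum_mul]
    exact Finset.sum_congr rfl fun s _ => by
      rw [Matrix.mul_smul, Matrix.smul_mul, Matrix.smul_mul]
  rw [Finset.sum_congr rfl fun a _ => hdist a, Finset.sum_comm]
  refine Finset.sum_congr rfl fun s _ => ?_
  rw [← Finset.smul_sum]
  have hA : ∑ a : QIdx d n,
      WX d n x * WZ d n a * L (WZ d n s) * (WZ d n a)ᴴ * (WX d n x)ᴴ
      = ∑ t : QIdx d n, ((WZ d n (-t) * L (WZ d n s)).trace * chi d n t (-x)) • WZ d n t := by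
    have hassoc : ∀ a : QIdx d n,
        WX d n x * WZ d n a * L (WZ d n s) * (WZ d n a)ᴴ * (WX d n x)ᴴ
        = WX d n x * (WZ d n a * L (WZ d n s) * (WZ d n a)ᴴ) * (WX d n x)ᴴ := by
      intro a
      simp only [mul_assoc]
    rw [Finset.sum_congr rfl fun a _ => hassoc a,
      show ∑ a : QIdx d n, WX d n x * (WZ d n a * L (WZ d n s) * (WZ d n a)ᴴ) * (WX d n x)ᴴ
        = WX d n x * (∑ a : QIdx d n, WZ d n a * L (WZ d n s) * (WZ d n a)ᴴ) * (WX d n x)ᴴ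
        from by rw [Finset.mul_sum, Finset.sum_mul], Zavg, Finset.mul_sum, Finset.sum_mul]
    refine Finset.sum_congr rfl fun t _ => ?_
    rw [Matrix.mul_smul, Matrix.smul_mul, XZX, smul_smul, mul_comm]
  rw [hA, Finset.smul_sum]
  exact Finset.sum_congr rfl fun t _ => by rw [smul_smul]; ring_nf

lemma chi_flip_neg (d n : ℕ) [NeZero d] (t x : QIdx d n) :
    chi d n t (-x) = chi d n x (-t) := by
  rw [chi_neg_right, chi_neg_right, chi_comm]

set_option maxHeartbeats 2000000 in
lemma step_lemma (c c' : QIdx d n) (σ : QMat d n) :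
    ∑ k : QIdx d n, (starRingEnd ℂ) (chi d n k (c - c')) • rc d n M k σ
    = ∑ s : QIdx d n,
        ((1 / (d:ℂ) ^ n) * (WZ d n (-s) * σ).trace * Fc d n M c c' s) • WZ d n (s + c' - c) := by
  have hdC : ((d:ℂ)) ≠ 0 := Nat.cast_ne_zero.mpr (NeZero.ne d)
  have hpow : ((d:ℂ)) ^ n ≠ 0 := pow_ne_zero n hdC
  have h1 : ∀ k : QIdx d n, rc d n M k σ
      = (1 / (d:ℂ) ^ (3*n)) • ∑ x : QIdx d n, ∑ s : QIdx d n, ∑ t : QIdx d n,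
          (chi d n s x * (WZ d n (-s) * σ).trace
            * (WZ d n (-t) * (M (k - x)) (WZ d n s)).trace * chi d n t (-x)) • WZ d n t := by
    intro k
    rw [rc]
    congr 1
    have hswap : ∀ F : QIdx d n → QIdx d n → QIdx d n → QMat d n,
        (∑ a : QIdx d n, ∑ b : QIdx d n, ∑ x : QIdx d n, F a b x)
          = ∑ x : QIdx d n, ∑ a : QIdx d n, ∑ b : QIdx d n, F a b x := by
      intro F
      calc (∑ a : QIdx d n, ∑ b : QIdx d n, ∑ x : QIdx d n, F a b x)
          = ∑ a : QIdx d n, ∑ x : QIdx d n, ∑ b : QIdx d n, F a b x :=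
            Finset.sum_congr rfl fun a _ => Finset.sum_comm
        _ = ∑ x : QIdx d n, ∑ a : QIdx d n, ∑ b : QIdx d n, F a b x := Finset.sum_comm
    rw [hswap]
    exact Finset.sum_congr rfl fun x _ => inner_ab d n (M (k - x)) x σ
  calc ∑ k : QIdx d n, (starRingEnd ℂ) (chi d n k (c - c')) • rc d n M k σ
      = ∑ k : QIdx d n, ∑ x : QIdx d n, ∑ s : QIdx d n, ∑ t : QIdx d n,
          ((starRingEnd ℂ) (chi d n k (c - c')) * (1 / (d:ℂ) ^ (3*n))
            * (chi d n s x * (WZ d n (-s) * σ).trace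
              * (WZ d n (-t) * (M (k - x)) (WZ d n s)).trace * chi d n t (-x))) • WZ d n t := by
        refine Finset.sum_congr rfl fun k _ => ?_
        rw [h1 k, smul_smul, Finset.smul_sum]
        refine Finset.sum_congr rfl fun x _ => ?_
        rw [Finset.smul_sum]
        refine Finset.sum_congr rfl fun s _ => ?_
        rw [Finset.smul_sum]
        refine Finset.sum_congr rfl fun t _ => ?_
        rw [smul_smul, mul_assoc]
    _ = ∑ x : QIdx d n, ∑ k : QIdx d n, ∑ s : QIdx d n, ∑ t : QIdx d n,
          ((starRingEnd ℂ) (chi d n (k + x) (c - c')) * (1 / (d:ℂ) ^ (3*n))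
            * (chi d n s x * (WZ d n (-s) * σ).trace
              * (WZ d n (-t) * (M k) (WZ d n s)).trace * chi d n t (-x))) • WZ d n t := by
        rw [Finset.sum_comm]
        refine Finset.sum_congr rfl fun x _ => ?_
        refine Fintype.sum_equiv (Equiv.subRight x) _ _ fun k => ?_
        simp only [Equiv.subRight_apply, sub_add_cancel]
    _ = ∑ s : QIdx d n, ∑ t : QIdx d n, ∑ x : QIdx d n, ∑ k : QIdx d n,
          (chi d n x (c' - c + s - t) *
            ((1 / (d:ℂ) ^ (3*n)) * (WZ d n (-s) * σ).trace
              * ((starRingEnd ℂ) (chi d n k (c - c'))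
                * (WZ d n (-t) * (M k) (WZ d n s)).trace))) • WZ d n t := by
        rw [show ∀ F : QIdx d n → QIdx d n → QIdx d n → QIdx d n → QMat d n,
            (∑ x : QIdx d n, ∑ k : QIdx d n, ∑ s : QIdx d n, ∑ t : QIdx d n, F x k s t)
              = ∑ s : QIdx d n, ∑ t : QIdx d n, ∑ x : QIdx d n, ∑ k : QIdx d n, F x k s t from ?_]
        · refine Finset.sum_congr rfl fun s _ => Finset.sum_congr rfl fun t _ =>
            Finset.sum_congr rfl fun x _ => Finset.sum_congr rfl fun k _ => ?_
          refine congrArg (fun z => z • WZ d n t) ?_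
          rw [chi_add_left, _root_.map_mul, star_chi d n x, chi_neg_flip, neg_sub,
            chi_comm d n s x, chi_flip_neg d n t x]
          have hx : chi d n x (c' - c + s - t)
              = chi d n x (c' - c) * chi d n x s * chi d n x (-t) := by
            rw [show c' - c + s - t = (c' - c) + s + (-t) from by abel, chi_add_right, chi_add_right]
          rw [hx]
          ring
        · intro F
          calc (∑ x : QIdx d n, ∑ k : QIdx d n, ∑ s : QIdx d n, ∑ t : QIdx d n, F x k s t)
              = ∑ x : QIdx d n, ∑ s : QIdx d n, ∑ k : QIdx d n, ∑ t : QIdx d n, F x k s t :=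
                Finset.sum_congr rfl fun x _ => Finset.sum_comm
            _ = ∑ s : QIdx d n, ∑ x : QIdx d n, ∑ k : QIdx d n, ∑ t : QIdx d n, F x k s t :=
                Finset.sum_comm
            _ = ∑ s : QIdx d n, ∑ x : QIdx d n, ∑ t : QIdx d n, ∑ k : QIdx d n, F x k s t :=
                Finset.sum_congr rfl fun s _ => Finset.sum_congr rfl fun x _ => Finset.sum_comm
            _ = ∑ s : QIdx d n, ∑ t : QIdx d n, ∑ x : QIdx d n, ∑ k : QIdx d n, F x k s t :=
                Finset.sum_congr rfl fun s _ => Finset.sum_comm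
    _ = ∑ s : QIdx d n, ∑ t : QIdx d n,
          ((if c' - c + s - t = 0 then ((d:ℂ))^n else 0) *
            (∑ k : QIdx d n, (1 / (d:ℂ) ^ (3*n)) * (WZ d n (-s) * σ).trace
              * ((starRingEnd ℂ) (chi d n k (c - c'))
                * (WZ d n (-t) * (M k) (WZ d n s)).trace))) • WZ d n t := by
        refine Finset.sum_congr rfl fun s _ => Finset.sum_congr rfl fun t _ => ?_
        rw [← sum_chi d n (c' - c + s - t), Finset.sum_mul_sum]
        rw [Finset.sum_smul]
        refine Finset.sum_congr rfl fun x _ => ?_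
        rw [Finset.sum_smul]
    _ = ∑ s : QIdx d n,
          (((d:ℂ))^n *
            (∑ k : QIdx d n, (1 / (d:ℂ) ^ (3*n)) * (WZ d n (-s) * σ).trace
              * ((starRingEnd ℂ) (chi d n k (c - c'))
                * (WZ d n (-(s + c' - c)) * (M k) (WZ d n s)).trace))) • WZ d n (s + c' - c) := by
        refine Finset.sum_congr rfl fun s _ => ?_
        rw [Finset.sum_eq_single (s + c' - c)]
        · rw [if_pos (by abel)]
        · intro t _ ht
          rw [if_neg (fun hc => ht (by
            have : t = c' - c + s := by
              have h0 := sub_eq_zero.mp hc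
              linear_combination (norm := abel) -h0
            rw [this]; abel)), zero_mul, zero_smul]
        · intro h; exact absurd (Finset.mem_univ _) h
    _ = ∑ s : QIdx d n,
        ((1 / (d:ℂ) ^ n) * (WZ d n (-s) * σ).trace * Fc d n M c c' s) • WZ d n (s + c' - c) := by
        refine Finset.sum_congr rfl fun s _ => congrArg (fun z => z • WZ d n (s + c' - c)) ?_
        rw [Fc, Finset.mul_sum, Finset.mul_sum, Finset.mul_sum]
        refine Finset.sum_congr rfl fun k _ => ?_
        rw [show 3 * n = n + (n + n) from by ring, pow_add, pow_add]
        field_simp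

end step

def chain {α : Type*} {m : ℕ} (f : Fin m → α → α) (ρ : α) : α :=
  (List.ofFn f).foldl (fun σ g => g σ) ρ

lemma chain_one {α : Type*} (f : Fin 1 → α → α) (ρ : α) : chain f ρ = f 0 ρ := by
  simp [chain, List.ofFn_succ]

lemma chain_snoc {α : Type*} {m : ℕ} (f : Fin m → α → α) (g : α → α) (ρ : α) :
    chain (Fin.snoc f g) ρ = g (chain f ρ) := by
  rw [chain, chain, List.ofFn_succ']
  simp only [Fin.snoc_castSucc, Fin.snoc_last, List.concat_eq_append, List.foldl_append,
    List.foldl_cons, List.foldl_nil]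

section chainsec
variable (d n : ℕ) [NeZero d] (M : QIdx d n → (QMat d n →ₗ[ℂ] QMat d n))

set_option maxHeartbeats 2000000 in
lemma chain_formula : ∀ (m : ℕ) (c : Fin (m+1+1) → QIdx d n) (σ : QMat d n),
    ∑ k : Fin (m+1) → QIdx d n,
      (∏ j : Fin (m+1), (starRingEnd ℂ) (chi d n (k j) (c j.castSucc - c j.succ)))
        • chain (fun j σ => rc d n M (k j) σ) σ
    = ∑ s : QIdx d n,
        ((1 / (d:ℂ)^n) * (WZ d n (-s) * σ).trace *
          ∏ j : Fin (m+1), Fc d n M (c j.castSucc) (c j.succ) (s + c j.castSucc - c 0))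
          • WZ d n (s + c (Fin.last (m+1)) - c 0) := by
  intro m
  induction m with
  | zero =>
    intro c σ
    have h0c : ((0 : Fin 1).castSucc : Fin 2) = 0 := rfl
    have h0s : ((0 : Fin 1).succ : Fin 2) = 1 := rfl
    have hL : (Fin.last 1 : Fin 2) = 1 := rfl
    calc ∑ k : Fin 1 → QIdx d n,
          (∏ j : Fin 1, (starRingEnd ℂ) (chi d n (k j) (c j.castSucc - c j.succ)))
            • chain (fun j σ => rc d n M (k j) σ) σ
        = ∑ a : QIdx d n, (starRingEnd ℂ) (chi d n a (c 0 - c 1)) • rc d n M a σ := by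
          refine Fintype.sum_equiv (Equiv.funUnique (Fin 1) (QIdx d n)) _ _ fun k => ?_
          rw [Fin.prod_univ_one, chain_one, h0c, h0s]
          rfl
      _ = ∑ s : QIdx d n,
            ((1 / (d:ℂ)^n) * (WZ d n (-s) * σ).trace * Fc d n M (c 0) (c 1) s)
              • WZ d n (s + c 1 - c 0) := step_lemma d n M (c 0) (c 1) σ
      _ = ∑ s : QIdx d n,
            ((1 / (d:ℂ)^n) * (WZ d n (-s) * σ).trace *
              ∏ j : Fin 1, Fc d n M (c j.castSucc) (c j.succ) (s + c j.castSucc - c 0))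
              • WZ d n (s + c (Fin.last 1) - c 0) := by
          refine Finset.sum_congr rfl fun s _ => ?_
          rw [Fin.prod_univ_one, h0c, h0s, hL, add_sub_cancel_right]
  | succ m ih =>
    intro c σ
    set c0 : QIdx d n := c 0 with hc0
    set cl : QIdx d n := c (Fin.castSucc (Fin.last (m+1))) with hcl
    set cl' : QIdx d n := c (Fin.last (m+1+1)) with hcl'
    set P : (Fin (m+1) → QIdx d n) → ℂ := fun k' =>
      ∏ j : Fin (m+1), (starRingEnd ℂ)
        (chi d n (k' j) (c j.castSucc.castSucc - c j.castSucc.succ)) with hP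
    set τ : (Fin (m+1) → QIdx d n) → QMat d n := fun k' =>
      chain (fun j σ' => rc d n M (k' j) σ') σ with hτ
    have hpow : ((d:ℂ)) ^ n ≠ 0 := pow_ne_zero n (Nat.cast_ne_zero.mpr (NeZero.ne d))
    have hih : ∑ k' : Fin (m+1) → QIdx d n, P k' • τ k'
        = ∑ s : QIdx d n,
            ((1 / (d:ℂ)^n) * (WZ d n (-s) * σ).trace *
              ∏ j : Fin (m+1), Fc d n M (c j.castSucc.castSucc) (c j.castSucc.succ)
                (s + c j.castSucc.castSucc - c0))
              • WZ d n (s + cl - c0) := by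
      have := ih (fun j => c j.castSucc) σ
      simp only [Fin.succ_castSucc] at this ⊢
      rw [hP, hτ]
      simp only [Fin.castSucc_zero] at this
      exact this
    have htr : ∀ s : QIdx d n,
        ∑ k' : Fin (m+1) → QIdx d n, P k' * (WZ d n (-s) * τ k').trace
          = (WZ d n (-s) * ∑ k' : Fin (m+1) → QIdx d n, P k' • τ k').trace := by
      intro s
      rw [Finset.mul_sum, Matrix.trace_sum]
      exact (Finset.sum_congr rfl fun k' _ => by
        rw [Matrix.mul_smul, Matrix.trace_smul, smul_eq_mul]).symm
    have hcollapse : ∀ s : QIdx d n,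
        (WZ d n (-s) * ∑ k' : Fin (m+1) → QIdx d n, P k' • τ k').trace
          = ((d:ℂ)^n) * ((1 / (d:ℂ)^n) * (WZ d n (-(s - cl + c0)) * σ).trace *
              ∏ j : Fin (m+1), Fc d n M (c j.castSucc.castSucc) (c j.castSucc.succ)
                ((s - cl + c0) + c j.castSucc.castSucc - c0)) := by
      intro s
      rw [hih, Finset.mul_sum, Matrix.trace_sum]
      rw [Finset.sum_congr rfl (fun s' _ => by
        rw [Matrix.mul_smul, Matrix.trace_smul, smul_eq_mul, trace_WZneg_mul_WZ])]
      rw [Finset.sum_eq_single (s - cl + c0)]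
      · rw [if_pos (by abel), mul_comm]
      · intro s' _ hs'
        rw [if_neg (fun hc => hs' (by rw [hc]; abel)), mul_zero]
      · intro h; exact absurd (Finset.mem_univ _) h
    calc ∑ k : Fin (m+1+1) → QIdx d n,
          (∏ j : Fin (m+1+1), (starRingEnd ℂ) (chi d n (k j) (c j.castSucc - c j.succ)))
            • chain (fun j σ => rc d n M (k j) σ) σ
        = ∑ p : QIdx d n × (Fin (m+1) → QIdx d n),
            (∏ j : Fin (m+1+1), (starRingEnd ℂ)
              (chi d n ((Fin.snoc p.2 p.1 : Fin (m+1+1) → QIdx d n) j) (c j.castSucc - c j.succ)))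
              • chain (fun j σ => rc d n M ((Fin.snoc p.2 p.1 : Fin (m+1+1) → QIdx d n) j) σ) σ := by
          exact (Equiv.sum_comp (Fin.snocEquiv (fun _ => QIdx d n)) _).symm
      _ = ∑ a : QIdx d n, ∑ k' : Fin (m+1) → QIdx d n,
            (P k' * (starRingEnd ℂ) (chi d n a (cl - cl')))
              • rc d n M a (τ k') := by
          rw [Fintype.sum_prod_type]
          refine Finset.sum_congr rfl fun a _ => Finset.sum_congr rfl fun k' _ => ?_
          have hch : (fun j σ' => rc d n M ((Fin.snoc k' a : Fin (m+1+1) → QIdx d n) j) σ')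
              = (Fin.snoc (fun j σ' => rc d n M (k' j) σ') (fun σ' => rc d n M a σ')
                  : Fin (m+1+1) → QMat d n → QMat d n) := by
            funext j
            refine Fin.lastCases ?_ (fun i => ?_) j
            · simp only [Fin.snoc_last]
            · simp only [Fin.snoc_castSucc]
          rw [hch, chain_snoc, Fin.prod_univ_castSucc]
          simp only [Fin.snoc_castSucc, Fin.snoc_last, Fin.succ_last]
          rfl
      _ = ∑ k' : Fin (m+1) → QIdx d n, P k' •
            ∑ a : QIdx d n, (starRingEnd ℂ) (chi d n a (cl - cl')) • rc d n M a (τ k') := by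
          rw [Finset.sum_comm]
          refine Finset.sum_congr rfl fun k' _ => ?_
          rw [Finset.smul_sum]
          exact Finset.sum_congr rfl fun a _ => by rw [smul_smul]
      _ = ∑ k' : Fin (m+1) → QIdx d n, P k' •
            ∑ s : QIdx d n,
              ((1 / (d:ℂ)^n) * (WZ d n (-s) * τ k').trace * Fc d n M cl cl' s)
                • WZ d n (s + cl' - cl) := by
          exact Finset.sum_congr rfl fun k' _ => by rw [step_lemma]
      _ = ∑ s : QIdx d n,
            ((1 / (d:ℂ)^n) * Fc d n M cl cl' s *
              ∑ k' : Fin (m+1) → QIdx d n, P k' * (WZ d n (-s) * τ k').trace)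
              • WZ d n (s + cl' - cl) := by
          rw [Finset.sum_congr rfl fun k' (_ : k' ∈ Finset.univ) => Finset.smul_sum, Finset.sum_comm]
          refine Finset.sum_congr rfl fun s _ => ?_
          rw [Finset.mul_sum, Finset.sum_smul]
          refine Finset.sum_congr rfl fun k' _ => ?_
          rw [smul_smul]
          refine congrArg (fun z => z • WZ d n (s + cl' - cl)) ?_
          ring
      _ = ∑ s : QIdx d n,
            ((1 / (d:ℂ)^n) * (WZ d n (-(s - cl + c0)) * σ).trace *
              ((∏ j : Fin (m+1), Fc d n M (c j.castSucc.castSucc) (c j.castSucc.succ)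
                ((s - cl + c0) + c j.castSucc.castSucc - c0)) * Fc d n M cl cl' s))
              • WZ d n (s + cl' - cl) := by
          refine Finset.sum_congr rfl fun s _ => ?_
          rw [htr, hcollapse]
          refine congrArg (fun z => z • WZ d n (s + cl' - cl)) ?_
          field_simp
      _ = ∑ s : QIdx d n,
            ((1 / (d:ℂ)^n) * (WZ d n (-s) * σ).trace *
              ∏ j : Fin (m+1+1), Fc d n M (c j.castSucc) (c j.succ) (s + c j.castSucc - c0))
              • WZ d n (s + c (Fin.last (m+1+1)) - c0) := by
          refine Fintype.sum_equiv (Equiv.subRight (cl - c0)) _ _ fun s => ?_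
          have e1 : s - (cl - c0) = s - cl + c0 := by abel
          have e2 : (s - cl + c0) + cl' - c0 = s + cl' - cl := by abel
          have e3 : (s - cl + c0) + cl - c0 = s := by abel
          rw [Equiv.subRight_apply, e1]
          conv_rhs => rw [Fin.prod_univ_castSucc]
          rw [Fin.succ_last, ← hcl, ← hcl', e2, e3]
      _ = ∑ s : QIdx d n,
            ((1 / (d:ℂ)^n) * (WZ d n (-s) * σ).trace *
              ∏ j : Fin (m+1+1), Fc d n M (c j.castSucc) (c j.succ) (s + c j.castSucc - c 0))
              • WZ d n (s + c (Fin.last (m+1+1)) - c 0) := by rw [hc0]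
end chainsec

/-- For `c_1, …, c_m` with the convention `c_{m+1} = 0`:
`Σ_{k_1,…,k_m} (∏_j χ_{k_j}(c_j − c_{j+1})^*) Tr[M̂_{k_m} ∘ ⋯ ∘ M̂_{k_1}(ρ)]
  = Tr(Z^{−c_1} ρ) ∏_j ν̃_{c_j, c_{j+1}}(M)`. -/
theorem expectation_of_phase_eq_product_of_gpf
    (d n : ℕ) [NeZero d] (hd : 2 ≤ d) (hn : 1 ≤ n)
    (M : QIdx d n → (QMat d n →ₗ[ℂ] QMat d n))
    (m : ℕ) (hm : 1 ≤ m) (c : Fin m → QIdx d n) (ρ : QMat d n) :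
    ∑ k : Fin m → QIdx d n,
      (∏ j : Fin m,
          (starRingEnd ℂ) (chi d n (k j)
            ((Fin.snoc c 0 : Fin (m + 1) → QIdx d n) j.castSucc -
              (Fin.snoc c 0 : Fin (m + 1) → QIdx d n) j.succ))) *
        (chain (fun j σ => rc d n M (k j) σ) ρ).trace
      = (WZ d n (-(c ⟨0, hm⟩)) * ρ).trace *
          ∏ j : Fin m,
            gpf d n M ((Fin.snoc c 0 : Fin (m + 1) → QIdx d n) j.castSucc)
              ((Fin.snoc c 0 : Fin (m + 1) → QIdx d n) j.succ) := by
  have hpow : ((d:ℂ)) ^ n ≠ 0 := pow_ne_zero n (Nat.cast_ne_zero.mpr (NeZero.ne d))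
  obtain ⟨m', rfl⟩ : ∃ m', m = m' + 1 := ⟨m - 1, by omega⟩
  have h := congrArg Matrix.trace (chain_formula d n M m' (Fin.snoc c 0) ρ)
  simp only [Matrix.trace_sum, Matrix.trace_smul, smul_eq_mul] at h
  rw [h]
  have hzero : (Fin.snoc c 0 : Fin (m'+1+1) → QIdx d n) 0 = c ⟨0, hm⟩ := by
    have h0 : ((⟨0, hm⟩ : Fin (m'+1)).castSucc) = (0 : Fin (m'+1+1)) := rfl
    rw [← h0, Fin.snoc_castSucc]
  have hlast : (Fin.snoc c 0 : Fin (m'+1+1) → QIdx d n) (Fin.last (m'+1)) = 0 :=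
    Fin.snoc_last _ _
  rw [hlast, hzero]
  rw [Finset.sum_eq_single (c ⟨0, hm⟩)]
  · rw [trace_WZ, if_pos (show c ⟨0, hm⟩ + 0 - c ⟨0, hm⟩ = 0 from by abel)]
    have hfc : ∀ j : Fin (m'+1),
        Fc d n M ((Fin.snoc c 0 : Fin (m'+1+1) → QIdx d n) j.castSucc)
          ((Fin.snoc c 0 : Fin (m'+1+1) → QIdx d n) j.succ)
          (c ⟨0, hm⟩ + (Fin.snoc c 0 : Fin (m'+1+1) → QIdx d n) j.castSucc - c ⟨0, hm⟩)
        = gpf d n M ((Fin.snoc c 0 : Fin (m'+1+1) → QIdx d n) j.castSucc)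
            ((Fin.snoc c 0 : Fin (m'+1+1) → QIdx d n) j.succ) := by
      intro j
      rw [add_sub_cancel_left, Fc_self]
    rw [Finset.prod_congr rfl fun j _ => hfc j]
    field_simp
  · intro s _ hs
    rw [trace_WZ, if_neg (fun hc => hs (by
      have h2 := sub_eq_zero.mp hc
      rwa [add_zero] at h2)), mul_zero]
  · intro hmem
    exact absurd (Finset.mem_univ _) hmem
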